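/- arXiv:2106.16037 — 2 statements merged into one kernel-verified Lean document; each statement's English description precedes it below -/
import Mathlib

section
/- If a function Q : S × A → ℝ on a finite linearly ordered state component δ and a linearly ordered finite action set A is submodular in (δ, a), i.e., Q(δ+1, a₂) - Q(δ+1, a₁) ≤ Q(δ, a₂) - Q(δ, a₁) for all a₁ ≤ a₂ and all δ, then the selection π(δ) := min {a : Q(δ,a) = min_{a'} Q(δ,a')} is monotone nondecreasing in δ. -/
/-- If `Q : ℕ → A → ℝ` (with `δ` the state component) is submodular in `(δ, a)`,
then the selection `π δ` defined as the least minimizer of `Q δ ·` is monotone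
nondecreasing in `δ`. -/
theorem submodular_least_argmin_monotone
    {A : Type*} [Fintype A] [Nonempty A] [LinearOrder A]
    (Δmax : ℕ) (Q : ℕ → A → ℝ) (π : ℕ → A)
    (hsub : ∀ δ, 1 ≤ δ → δ + 1 ≤ Δmax → ∀ a₁ a₂ : A, a₁ ≤ a₂ →
      Q (δ + 1) a₂ - Q (δ + 1) a₁ ≤ Q δ a₂ - Q δ a₁)
    (hπ : ∀ δ, 1 ≤ δ → δ ≤ Δmax →
      IsLeast {a : A | ∀ a' : A, Q δ a ≤ Q δ a'} (π δ)) :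
    ∀ δ δ', 1 ≤ δ → δ' ≤ Δmax → δ ≤ δ' → π δ ≤ π δ' := by
  have key : ∀ δ, 1 ≤ δ → δ + 1 ≤ Δmax → π δ ≤ π (δ + 1) := by
    intro δ h1 h2
    by_contra h
    push_neg at h
    have hle : π (δ + 1) ≤ π δ := le_of_lt h
    have hmin := hπ δ h1 (le_trans (Nat.le_succ δ) h2)
    have hmin' := hπ (δ + 1) (le_trans h1 (Nat.le_succ δ)) h2
    have h2q := hsub δ h1 h2 (π (δ + 1)) (π δ) hle
    have ha := hmin.1 (π (δ + 1))
    have hb := hmin'.1 (π δ)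
    have hall : ∀ a', Q δ (π (δ + 1)) ≤ Q δ a' := by
      intro a'
      have : Q δ (π (δ + 1)) ≤ Q δ (π δ) := by linarith
      exact this.trans (hmin.1 a')
    exact absurd (hmin.2 hall) (not_le.mpr h)
  intro δ δ' h1 h2 h3
  induction δ' with
  | zero => omega
  | succ n ih =>
    rcases Nat.lt_or_ge δ (n + 1) with hlt | hge
    · have hδn : δ ≤ n := Nat.lt_succ_iff.mp hlt
      exact (ih (by omega) hδn).trans (key n (by omega) h2)
    · have : δ = n + 1 := le_antisymm h3 hge
      simp [this]
end

section
/- If the differential cost function h satisfies the three submodularity inequalities (8)–(10) of the form g(r)[h(·, δ+2, ·) − h(·, δ+1, ·)] ≤ h(·, δ+2, ·) − h(·, δ+1, ·) (with appropriate state arguments and 0 ≤ g(r) ≤ 1), and if h is nondecreasing in δ, then for the idle/transmit action pair the Q-function difference Q(s_{δ}, n) − Q(s_{δ}, i) is nonincreasing in δ. -/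
/-- Abstract setting of the proof of Theorem 1: with `h` the differential cost
function (as a function of the age, capped at `Δmax`), `Q(δ, n) = δ + g·h(min(δ+1,Δmax)) + (1−g)·h(1)`
and `Q(δ, i) = δ + h(min(δ+1,Δmax))`. If `h` is nondecreasing and `0 ≤ g ≤ 1`,
then `Q(δ, n) − Q(δ, i)` is nonincreasing in `δ`. -/
theorem q_difference_nonincreasing (Δmax : ℕ) (h : ℕ → ℝ) (g : ℝ)
    (hmono : Monotone h) (hg0 : 0 ≤ g) (hg1 : g ≤ 1)
    (Qn Qi : ℕ → ℝ)
    (hQn : ∀ δ : ℕ, Qn δ = (δ : ℝ) + (g * h (min (δ + 1) Δmax) + (1 - g) * h 1))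
    (hQi : ∀ δ : ℕ, Qi δ = (δ : ℝ) + h (min (δ + 1) Δmax)) :
    ∀ δ δ' : ℕ, δ ≤ δ' → Qn δ' - Qi δ' ≤ Qn δ - Qi δ := by
  intro δ δ' hle
  rw [hQn, hQn, hQi, hQi]
  have hh : h (min (δ + 1) Δmax) ≤ h (min (δ' + 1) Δmax) :=
    hmono (min_le_min (by omega) le_rfl)
  nlinarith [hh, hg1]
end
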